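/- For any word v over {x,y}, the polynomial 1 + Σ_T ((t+1)/t)^{κ(v^T)} t^{|T|+1} (sum over subsets T of positions of v) equals 1 + Σ (t+1)^k, where the second sum ranges over all factorizations v = u_1 · u_2 ··· u_k into k ≥ 1 factors such that each of u_1,...,u_{k-1} has the form x^i y or y^i x for some i ≥ 0, and u_k is arbitrary (possibly empty). -/

import Mathlib

/-- `κ(w) = 2 + #{i : w_i ≠ w_{i+1}}` for nonempty `w`, and `κ(empty) = 1`. -/
def kappa (w : List Bool) : ℕ :=
  if w = [] then 1 else 2 + (w.zip w.tail).countP (fun p => p.1 != p.2)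

/-- The subword of `v` at the (1-indexed) positions in `T`. -/
def subword (v : List Bool) (T : Finset ℕ) : List Bool :=
  (v.zipIdx.filter (fun p => decide (p.2 + 1 ∈ T))).map Prod.fst

/-- The `f`-polynomial `F_v(t) = 1 + ∑_{T ⊆ [|v|]} ((t+1)/t)^{κ(v^T)} t^{|T|+1}`,
written with the power of `t` as `t^{|T|+1-κ(v^T)}` (valid since `κ(v^T) ≤ |T|+1`). -/
noncomputable def fPoly (v : List Bool) : Polynomial ℤ :=
  1 + ∑ T ∈ (Finset.Icc 1 v.length).powerset,
      (Polynomial.X + 1) ^ kappa (subword v T) *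
        Polynomial.X ^ (T.card + 1 - kappa (subword v T))

/-- A word of the form `x^i y` or `y^i x` (with `x = false`, `y = true`). -/
def GoodFactor (w : List Bool) : Prop :=
  (∃ i, w = List.replicate i false ++ [true]) ∨
  (∃ i, w = List.replicate i true ++ [false])

/-!
Both sides satisfy the same recursion in the first factor. Write `S φ v` for the sum of `φ r`
over the splittings `v = u ++ r` with `u` of the form `x^i y` or `y^i x`; such `u` are
nonempty, so `φ v = (t + 1) * (1 + S φ v)` determines `φ` by induction on the length.

For the factorization side this is splitting off the first factor. For the subword side, let
`F v` be the sum of the weights `(t + 1)^κ(w) t^(|w| + 1 - κ(w))` over all subwords `w` of `v`,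
so that the left side is `1 + F v`.
Putting a letter `c` in front of `w` multiplies its weight by `t` if `w` starts with `c` and by
`t + 1` otherwise, so `F (c v) = (t + 1) F v + B_c v`, where `B_c v` sums the weights of the
subwords of `v` not starting with `c`. Peeling off the leading letters of `v` shows
`B_c v = (t + 1) (1 + ∑ F r)` over the splittings `v = c^j c̄ ++ r`, and the two sums combine to
`S F (c v)`.
-/

open Polynomial

lemma kappa_cons (c : Bool) (w : List Bool) :
    kappa (c :: w) = if w.head? = some c then kappa w else kappa w + 1 := by
  rcases w with _ | ⟨d, w⟩
  · simp [kappa]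
  · by_cases h : d = c
    · subst h; simp [kappa]
    · simp [kappa, h, Ne.symm h]; omega

lemma kappa_le_length_add_one (w : List Bool) : kappa w ≤ w.length + 1 := by
  induction w with
  | nil => simp [kappa]
  | cons c w ih => rw [kappa_cons]; split <;> simp <;> omega

noncomputable def weight (w : List Bool) : ℤ[X] :=
  (X + 1) ^ kappa w * X ^ (w.length + 1 - kappa w)

lemma weight_nil : weight [] = X + 1 := by simp [weight, kappa]

lemma weight_cons (c : Bool) (w : List Bool) :
    weight (c :: w) = if w.head? = some c then X * weight w else (X + 1) * weight w := by
  have := kappa_le_length_add_one w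
  rw [weight, weight, kappa_cons]
  split
  · rw [List.length_cons, show w.length + 1 + 1 - kappa w = w.length + 1 - kappa w + 1 by omega]
    ring
  · rw [List.length_cons, show w.length + 1 + 1 - (kappa w + 1) = w.length + 1 - kappa w by omega]
    ring

noncomputable def weightSum (v : List Bool) : ℤ[X] := (v.sublists'.map weight).sum

noncomputable def weightSumHeadNe (c : Bool) (v : List Bool) : ℤ[X] :=
  (v.sublists'.map fun w => if w.head? = some c then 0 else weight w).sum

lemma sum_sublists'_weight_cons (c : Bool) (v : List Bool) :
    (v.sublists'.map fun w => weight (c :: w)).sum = X * weightSum v + weightSumHeadNe c v := by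
  rw [weightSum, weightSumHeadNe, ← List.sum_map_mul_left, ← List.sum_map_add]
  congr 1
  refine List.map_congr_left fun w _ => ?_
  rw [weight_cons]
  split <;> ring

lemma weightSum_cons (c : Bool) (v : List Bool) :
    weightSum (c :: v) = (X + 1) * weightSum v + weightSumHeadNe c v := by
  rw [weightSum, List.sublists'_cons, List.map_append, List.sum_append, List.map_map,
    Function.comp_def, sum_sublists'_weight_cons, weightSum]
  ring

lemma weightSumHeadNe_cons_self (c : Bool) (v : List Bool) :
    weightSumHeadNe c (c :: v) = weightSumHeadNe c v := by
  simp [weightSumHeadNe, List.sublists'_cons, Function.comp_def]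

lemma sum_sublists'_ite_eq_nil {α M : Type*} [AddCommMonoid M] (f : List α → M) (v : List α) :
    (v.sublists'.map fun w => if w = [] then f w else 0).sum = f [] := by
  induction v with
  | nil => simp
  | cons c v ih => simp [List.sublists'_cons, Function.comp_def, ih]

lemma weightSumHeadNe_add_weightSumHeadNe_not (c : Bool) (v : List Bool) :
    weightSumHeadNe c v + weightSumHeadNe (!c) v = weightSum v + (X + 1) := by
  rw [weightSumHeadNe, weightSumHeadNe, weightSum, ← List.sum_map_add, ← weight_nil,
    ← sum_sublists'_ite_eq_nil weight v, ← List.sum_map_add]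
  congr 1
  refine List.map_congr_left fun w _ => ?_
  rcases w with _ | ⟨d, w⟩
  · simp
  · cases c <;> cases d <;> simp

lemma weightSumHeadNe_cons_not (c : Bool) (v : List Bool) :
    weightSumHeadNe c ((!c) :: v) = (X + 1) * (1 + weightSum v) := by
  have hsplit : weightSumHeadNe c ((!c) :: v) =
      weightSumHeadNe c v + (X * weightSum v + weightSumHeadNe (!c) v) := by
    rw [← sum_sublists'_weight_cons, weightSumHeadNe, List.sublists'_cons, List.map_append,
      List.sum_append, List.map_map]
    have : ∀ w : List Bool, (if ((!c) :: w).head? = some c then 0 else weight ((!c) :: w)) =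
        weight ((!c) :: w) := by
      cases c <;> simp
    simp only [Function.comp_def, this, weightSumHeadNe]
  linear_combination hsplit + weightSumHeadNe_add_weightSumHeadNe_not c v

lemma subword_append_singleton {v : List Bool} {T : Finset ℕ} (hT : T ⊆ Finset.Icc 1 v.length)
    (c : Bool) : subword (v ++ [c]) T = subword v T := by
  have hlast : v.length + 1 ∉ T := fun h => by simpa using hT h
  simp [subword, List.zipIdx_append, hlast]

lemma subword_append_singleton_insert (v : List Bool) (T : Finset ℕ) (c : Bool) :
    subword (v ++ [c]) (insert (v.length + 1) T) = subword v T ++ [c] := by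
  simp only [subword, List.zipIdx_append, List.filter_append, List.map_append]
  congr 2
  · refine List.filter_congr fun p hp => ?_
    have := List.snd_lt_add_of_mem_zipIdx hp
    simp only [Finset.mem_insert, decide_eq_decide, or_iff_right_iff_imp]
    omega
  · simp

lemma sum_powerset_subword {M : Type*} [AddCommMonoid M] (v : List Bool)
    (g : List Bool → ℕ → M) :
    ∑ T ∈ (Finset.Icc 1 v.length).powerset, g (subword v T) T.card =
      (v.sublists.map fun w => g w w.length).sum := by
  induction v using List.reverseRecOn generalizing g with
  | nil => simp [subword]
  | append_singleton v c ih =>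
    have hlast : v.length + 1 ∉ Finset.Icc 1 v.length := by simp
    rw [List.length_append, List.length_singleton,
      ← Finset.insert_Icc_right_eq_Icc_add_one (by omega), Finset.sum_powerset_insert hlast,
      List.sublists_concat, List.map_append, List.sum_append,
      List.map_map, Function.comp_def, ← ih]
    simp only [List.length_append, List.length_singleton, ← ih fun w k => g (w ++ [c]) (k + 1)]
    congr 1 <;> refine Finset.sum_congr rfl fun T hT => ?_
    · rw [subword_append_singleton (Finset.mem_powerset.mp hT)]
    · rw [subword_append_singleton_insert,
        Finset.card_insert_of_notMem fun h => hlast (Finset.mem_powerset.mp hT h)]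

lemma fPoly_eq_one_add_weightSum (v : List Bool) : fPoly v = 1 + weightSum v := by
  rw [fPoly, sum_powerset_subword v fun w k => (X + 1) ^ kappa w * X ^ (k + 1 - kappa w),
    weightSum, ← ((List.sublists_perm_sublists' v).map weight).sum_eq]
  rfl

def RunFactor (c : Bool) (u : List Bool) : Prop := ∃ j, u = List.replicate j c ++ [!c]

lemma goodFactor_iff_exists_runFactor (u : List Bool) : GoodFactor u ↔ ∃ c, RunFactor c u := by
  simp [GoodFactor, RunFactor, Bool.exists_bool]

lemma not_runFactor_nil (c : Bool) : ¬ RunFactor c [] := by simp [RunFactor]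

lemma runFactor_cons_self_iff (c : Bool) (w : List Bool) :
    RunFactor c (c :: w) ↔ RunFactor c w := by
  constructor
  · rintro ⟨_ | j, h⟩
    · cases c <;> simp at h
    · exact ⟨j, by simpa [List.replicate_succ] using h⟩
  · rintro ⟨j, rfl⟩
    exact ⟨j + 1, by simp [List.replicate_succ]⟩

lemma runFactor_cons_not_iff (c : Bool) (w : List Bool) :
    RunFactor c ((!c) :: w) ↔ w = [] := by
  constructor
  · rintro ⟨_ | j, h⟩
    · simpa using h
    · cases c <;> simp [List.replicate_succ] at h
  · rintro rfl
    exact ⟨0, rfl⟩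

lemma not_goodFactor_nil : ¬ GoodFactor [] := by
  simp [goodFactor_iff_exists_runFactor, not_runFactor_nil]

lemma goodFactor_cons_iff (c : Bool) (w : List Bool) :
    GoodFactor (c :: w) ↔ w = [] ∨ RunFactor c w := by
  rw [goodFactor_iff_exists_runFactor, Bool.exists_bool]
  cases c
  · rw [runFactor_cons_self_iff, show false = !true from rfl, runFactor_cons_not_iff, or_comm]
  · rw [runFactor_cons_self_iff, show true = !false from rfl, runFactor_cons_not_iff]

section PrefixSum

variable {α M N : Type*} [AddCommMonoid M] [AddCommMonoid N]

open Classical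

noncomputable def prefixSum (p : List α → Prop) (f : List α → M) (v : List α) : M :=
  ∑ i ∈ Finset.range (v.length + 1), if p (v.take i) then f (v.drop i) else 0

lemma prefixSum_nil (p : List α → Prop) (f : List α → M) :
    prefixSum p f [] = if p [] then f [] else 0 := by
  simp [prefixSum]

lemma prefixSum_cons (p : List α → Prop) (f : List α → M) (c : α) (v : List α) :
    prefixSum p f (c :: v) =
      (if p [] then f (c :: v) else 0) + prefixSum (fun u => p (c :: u)) f v := by
  simp only [prefixSum, List.length_cons, Finset.sum_range_succ' _ (v.length + 1),
    List.take_succ_cons, List.drop_succ_cons, List.take_zero, List.drop_zero]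
  exact add_comm _ _

lemma prefixSum_false (f : List α → M) (v : List α) : prefixSum (fun _ => False) f v = 0 := by
  simp [prefixSum]

lemma prefixSum_eq_nil (f : List α → M) (v : List α) : prefixSum (· = []) f v = f v := by
  rcases v with _ | ⟨c, v⟩
  · simp [prefixSum_nil]
  · simp [prefixSum_cons, prefixSum_false]

lemma prefixSum_or {p q : List α → Prop} (hpq : ∀ u, ¬ (p u ∧ q u)) (f : List α → M)
    (v : List α) :
    prefixSum (fun u => p u ∨ q u) f v = prefixSum p f v + prefixSum q f v := by
  simp only [prefixSum, ← Finset.sum_add_distrib]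
  refine Finset.sum_congr rfl fun i _ => ?_
  have := hpq (v.take i)
  split_ifs <;> simp_all

lemma map_prefixSum (φ : M →+ N) (p : List α → Prop) (f : List α → M) (v : List α) :
    φ (prefixSum p f v) = prefixSum p (fun w => φ (f w)) v := by
  simp only [prefixSum, map_sum, apply_ite φ, map_zero]

lemma prefixSum_sum {ι : Type*} (s : Finset ι) (p : List α → Prop) (f : ι → List α → M)
    (v : List α) :
    prefixSum p (fun w => ∑ k ∈ s, f k w) v = ∑ k ∈ s, prefixSum p (f k) v := by
  simp only [prefixSum, Finset.ite_sum_zero]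
  exact Finset.sum_comm

lemma prefixSum_congr_of_not_nil {p : List α → Prop} (hp : ¬ p []) {f g : List α → M}
    {v : List α} (h : ∀ w, w.length < v.length → f w = g w) :
    prefixSum p f v = prefixSum p g v := by
  refine Finset.sum_congr rfl fun i hi => ?_
  split_ifs with hpi
  · have hi0 : i ≠ 0 := by
      rintro rfl
      exact hp hpi
    rw [Finset.mem_range] at hi
    exact h _ (by rw [List.length_drop]; omega)
  · rfl

lemma eq_of_eq_prefixSum {p : List α → Prop} (hp : ¬ p []) (Φ : List α → M → M)
    {f g : List α → M} (hf : ∀ v, f v = Φ v (prefixSum p f v))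
    (hg : ∀ v, g v = Φ v (prefixSum p g v)) : f = g := by
  funext v
  induction hn : v.length using Nat.strong_induction_on generalizing v with
  | _ n ih =>
    rw [hf, hg, prefixSum_congr_of_not_nil hp fun w hw => ih _ (hn ▸ hw) w rfl]

end PrefixSum

section PrefixSumFactor

variable {M : Type*} [AddCommMonoid M] (f : List Bool → M)

lemma prefixSum_goodFactor_cons (c : Bool) (v : List Bool) :
    prefixSum GoodFactor f (c :: v) = f v + prefixSum (RunFactor c) f v := by
  have hdisj (u : List Bool) : ¬ (u = [] ∧ RunFactor c u) := by
    rintro ⟨rfl, h⟩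
    exact not_runFactor_nil c h
  simp only [prefixSum_cons, not_goodFactor_nil, if_false, zero_add, goodFactor_cons_iff,
    prefixSum_or hdisj, prefixSum_eq_nil]

lemma prefixSum_runFactor_nil (c : Bool) : prefixSum (RunFactor c) f [] = 0 := by
  simp [prefixSum_nil, not_runFactor_nil]

lemma prefixSum_runFactor_cons_self (c : Bool) (v : List Bool) :
    prefixSum (RunFactor c) f (c :: v) = prefixSum (RunFactor c) f v := by
  simp only [prefixSum_cons, not_runFactor_nil, if_false, zero_add, runFactor_cons_self_iff]

lemma prefixSum_runFactor_cons_not (c : Bool) (v : List Bool) :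
    prefixSum (RunFactor c) f ((!c) :: v) = f v := by
  simp only [prefixSum_cons, not_runFactor_nil, if_false, zero_add, runFactor_cons_not_iff,
    prefixSum_eq_nil]

end PrefixSumFactor

lemma weightSumHeadNe_eq (c : Bool) (v : List Bool) :
    weightSumHeadNe c v = (X + 1) * (1 + prefixSum (RunFactor c) weightSum v) := by
  induction v with
  | nil => simp [weightSumHeadNe, weight_nil, prefixSum_runFactor_nil]
  | cons d v ih =>
    obtain rfl | rfl : d = c ∨ d = !c := by cases c <;> cases d <;> simp
    · rw [weightSumHeadNe_cons_self, prefixSum_runFactor_cons_self, ih]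
    · rw [weightSumHeadNe_cons_not, prefixSum_runFactor_cons_not]

lemma weightSum_eq (v : List Bool) :
    weightSum v = (X + 1) * (1 + prefixSum GoodFactor weightSum v) := by
  rcases v with _ | ⟨c, v⟩
  · simp [weightSum, weight_nil, prefixSum_nil, not_goodFactor_nil]
  · rw [weightSum_cons, weightSumHeadNe_eq, prefixSum_goodFactor_cons]
    ring

def IsFactorization (k : ℕ) (v : List Bool) (L : List (List Bool)) : Prop :=
  L.length = k ∧ L.flatten = v ∧ ∀ w ∈ L.dropLast, GoodFactor w

noncomputable def numFactorizations (k : ℕ) (v : List Bool) : ℕ :=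
  Nat.card {L // IsFactorization k v L}

lemma IsFactorization.length_le {k : ℕ} {v : List Bool} {L : List (List Bool)}
    (hL : IsFactorization k v L) : k ≤ v.length + 1 := by
  obtain ⟨rfl, rfl, hgood⟩ := hL
  have hpos : ∀ n ∈ L.dropLast.map List.length, 1 ≤ n := by
    simp only [List.mem_map]
    rintro _ ⟨w, hw, rfl⟩
    exact List.length_pos_iff.mpr fun h => not_goodFactor_nil (h ▸ hgood w hw)
  have hsub := ((List.dropLast_sublist L).flatten).length_le
  have := List.length_le_sum_of_one_le _ hpos
  simp only [List.length_map, List.length_dropLast, ← List.length_flatten] at this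
  omega

lemma isFactorization_one_iff {v : List Bool} {L : List (List Bool)} :
    IsFactorization 1 v L ↔ L = [v] := by
  constructor
  · rintro ⟨hlen, hflat, -⟩
    obtain ⟨u, rfl⟩ := List.length_eq_one_iff.mp hlen
    simpa using hflat
  · rintro rfl
    exact ⟨rfl, by simp, by simp⟩

lemma numFactorizations_one (v : List Bool) : numFactorizations 1 v = 1 := by
  rw [numFactorizations, Nat.card_eq_one_iff_exists]
  exact ⟨⟨[v], isFactorization_one_iff.mpr rfl⟩, fun ⟨L, hL⟩ =>
    Subtype.ext (isFactorization_one_iff.mp hL)⟩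

lemma isFactorization_cons_iff {k : ℕ} {v u : List Bool} {M : List (List Bool)} :
    IsFactorization (k + 2) v (u :: M) ↔
      GoodFactor u ∧ u ++ M.flatten = v ∧ IsFactorization (k + 1) M.flatten M := by
  constructor
  · rintro ⟨hlen, hflat, hgood⟩
    have hM : M ≠ [] := List.ne_nil_of_length_pos (by simp at hlen; omega)
    rw [List.dropLast_cons_of_ne_nil hM] at hgood
    exact ⟨hgood u List.mem_cons_self, hflat, by simpa using hlen, rfl,
      fun w hw => hgood w (List.mem_cons_of_mem _ hw)⟩
  · rintro ⟨hu, rfl, hlen, -, hgood⟩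
    refine ⟨by simp [hlen], rfl, ?_⟩
    rw [List.dropLast_cons_of_ne_nil (List.ne_nil_of_length_pos (by omega))]
    rintro w (_ | ⟨_, hw⟩)
    exacts [hu, hgood w hw]

noncomputable def factorizationEquiv (k : ℕ) (v : List Bool) :
    (Σ i : {i : Fin (v.length + 1) // GoodFactor (v.take i)},
      {M // IsFactorization (k + 1) (v.drop i) M}) ≃ {L // IsFactorization (k + 2) v L} :=
  Equiv.ofBijective
    (fun x => ⟨v.take x.1.1 :: x.2.1, isFactorization_cons_iff.mpr
      ⟨x.1.2, by rw [x.2.2.2.1, List.take_append_drop], by rw [x.2.2.2.1]; exact x.2.2⟩⟩)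
    (by
      constructor
      · rintro ⟨⟨i, hi⟩, M, hM⟩ ⟨⟨j, hj⟩, M', hM'⟩ h
        simp only [Subtype.mk.injEq, List.cons.injEq] at h
        obtain ⟨hij, rfl⟩ := h
        obtain rfl : i = j := by
          have := congrArg List.length hij
          simp only [List.length_take] at this
          omega
        rfl
      · rintro ⟨_ | ⟨u, M⟩, hL⟩
        · simp [IsFactorization] at hL
        · obtain ⟨hu, rfl, hM⟩ := isFactorization_cons_iff.mp hL
          refine ⟨⟨⟨⟨u.length, by simp⟩, by simpa using hu⟩, M, by simpa using hM⟩, ?_⟩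
          simp)

lemma finite_factorizations : ∀ (k : ℕ) (v : List Bool), Finite {L // IsFactorization k v L}
  | 0, _ => @Finite.of_subsingleton _ ⟨fun ⟨_, hL⟩ ⟨_, hL'⟩ => Subtype.ext
      ((List.length_eq_zero_iff.mp hL.1).trans (List.length_eq_zero_iff.mp hL'.1).symm)⟩
  | 1, _ => @Finite.of_subsingleton _ ⟨fun ⟨_, hL⟩ ⟨_, hL'⟩ =>
      Subtype.ext ((isFactorization_one_iff.mp hL).trans (isFactorization_one_iff.mp hL').symm)⟩
  | k + 2, v =>
    have := fun w => finite_factorizations (k + 1) w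
    Finite.of_equiv _ (factorizationEquiv k v)

lemma numFactorizations_add_two (k : ℕ) (v : List Bool) :
    numFactorizations (k + 2) v = prefixSum GoodFactor (numFactorizations (k + 1)) v := by
  classical
  have := fun w => finite_factorizations (k + 1) w
  rw [numFactorizations, ← Nat.card_congr (factorizationEquiv k v), Nat.card_sigma]
  change ∑ i : {i : Fin (v.length + 1) // _}, numFactorizations (k + 1) (v.drop i.1) = _
  rw [← Finset.sum_subtype (Finset.univ.filter _) (fun _ => Finset.mem_filter_univ _)
      (fun i : Fin (v.length + 1) => numFactorizations (k + 1) (v.drop i)),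
    Finset.sum_filter, Fin.sum_univ_eq_sum_range
      (fun i => if GoodFactor (v.take i) then numFactorizations (k + 1) (v.drop i) else 0)]
  rfl

lemma numFactorizations_eq_zero {k : ℕ} {v : List Bool} (h : v.length + 1 < k) :
    numFactorizations k v = 0 :=
  have : IsEmpty {L // IsFactorization k v L} := ⟨fun L => by have := L.2.length_le; omega⟩
  Nat.card_of_isEmpty

section FactorizationSum

variable {R : Type*} [CommSemiring R] (a : R)

noncomputable def factorizationSum (v : List Bool) : R :=
  ∑ k ∈ Finset.range (v.length + 1), (numFactorizations (k + 1) v : R) * a ^ (k + 1)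

lemma sum_range_numFactorizations {v : List Bool} {n : ℕ} (hn : v.length + 1 ≤ n) :
    ∑ k ∈ Finset.range n, (numFactorizations (k + 1) v : R) * a ^ (k + 1) =
      factorizationSum a v := by
  refine (Finset.sum_subset (Finset.range_subset_range.mpr hn) fun k _ hk => ?_).symm
  rw [Finset.mem_range] at hk
  rw [numFactorizations_eq_zero (by omega), Nat.cast_zero, zero_mul]

lemma factorizationSum_eq (v : List Bool) :
    factorizationSum a v = a * (1 + prefixSum GoodFactor (factorizationSum a) v) := by
  have hfirst (k : ℕ) : (numFactorizations (k + 2) v : R) * a ^ (k + 2) =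
      prefixSum GoodFactor (fun w => (numFactorizations (k + 1) w : R) * a ^ (k + 2)) v := by
    rw [numFactorizations_add_two]
    exact map_prefixSum ((AddMonoidHom.mulRight _).comp (Nat.castAddMonoidHom R)) _ _ _
  have hrest : prefixSum GoodFactor
      (fun w => ∑ k ∈ Finset.range v.length, (numFactorizations (k + 1) w : R) * a ^ (k + 2)) v =
      a * prefixSum GoodFactor (factorizationSum a) v := by
    calc _ = prefixSum GoodFactor (fun w => a * factorizationSum a w) v :=
          prefixSum_congr_of_not_nil not_goodFactor_nil fun w hw => by
            simp only [pow_succ' a (_ + 1), mul_left_comm _ a, ← Finset.mul_sum,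
              sum_range_numFactorizations a hw]
      _ = a * prefixSum GoodFactor (factorizationSum a) v :=
          (map_prefixSum (AddMonoidHom.mulLeft a) _ _ _).symm
  rw [factorizationSum, Finset.sum_range_succ', numFactorizations_one]
  simp only [hfirst, ← prefixSum_sum, hrest]
  ring

end FactorizationSum

/-- `F(v) = 1 + ∑ (t+1)^k`, summed over factorizations
`v = u_1 ⋯ u_k` with `u_1,…,u_{k-1}` of the form `x^i y` or `y^i x`. -/
theorem stmt11 (v : List Bool) :
    fPoly v = 1 + ∑ k ∈ Finset.Icc 1 (v.length + 1),
      (Nat.card {L : List (List Bool) //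
          L.length = k ∧ L.flatten = v ∧ ∀ w ∈ L.dropLast, GoodFactor w} : Polynomial ℤ) *
        (Polynomial.X + 1) ^ k := by
  have hweight : weightSum = factorizationSum (X + 1 : ℤ[X]) :=
    eq_of_eq_prefixSum not_goodFactor_nil (fun _ s => (X + 1) * (1 + s)) weightSum_eq
      (factorizationSum_eq _)
  rw [fPoly_eq_one_add_weightSum, hweight, factorizationSum, Finset.range_eq_Ico,
    Finset.sum_Ico_add' (fun k => (numFactorizations k v : ℤ[X]) * (X + 1) ^ k),
    Finset.Ico_add_one_right_eq_Icc, zero_add]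
  rfl
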